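/- arXiv:1308.5131 — 2 statements merged into one kernel-verified Lean document; each statement's English description precedes it below -/
import Mathlib

section
/- Let A be a Z-graded algebra over a commutative ring K, d an integer, and ⟪-,-⟫ a d-graded bibracket on A (a bibracket of degree d satisfying both d-graded Leibniz rules). Define the associated bracket ⟨a,b⟩ = ⟪a,b⟫' ⟪a,b⟫'' ∈ A (the product of the two tensor components). Then for all homogeneous a, b, c in A, one has ⟨ab, c⟩ = (-1)^{|a||b|} ⟨ba, c⟩. Consequently, ⟨[A,A], A⟩ = 0, where [A,A] is the submodule spanned by graded commutators ab - (-1)^{|a||b|} ba. -/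
open scoped TensorProduct

noncomputable section

/-- The sign `(-1)^n`, for `n : ℤ`, as an element of the commutative ring `K`. -/
def sgn (K : Type*) [CommRing K] (n : ℤ) : K := ((n.negOnePow : ℤ) : K)

variable {K : Type*} [CommRing K] {A : Type*} [Ring A] [Algebra K A]
variable (𝒜 : ℤ → Submodule K A) [GradedAlgebra 𝒜]

/-- The `K`-linear endomorphism of `A` multiplying the degree-`p` component by `(-1)^{p·k}`. -/
def twist (k : ℤ) : A →ₗ[K] A :=
  (DirectSum.toModule K ℤ A fun p => sgn K (p * k) • (𝒜 p).subtype) ∘ₗ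
    (DirectSum.decomposeAlgEquiv 𝒜).toLinearMap

/-- The graded flip `P₂₁` of `A ⊗ A`, sending `x' ⊗ x''` (with `x', x''` homogeneous)
to `(-1)^{|x'||x''|} x'' ⊗ x'`. -/
def gflip : A ⊗[K] A →ₗ[K] A ⊗[K] A :=
  TensorProduct.lift
    ((DirectSum.toModule K ℤ (A →ₗ[K] A ⊗[K] A) fun p =>
        ((LinearMap.llcomp K A A (A ⊗[K] A)).flip (twist 𝒜 p)).comp
          ((TensorProduct.mk K A A).flip.comp (𝒜 p).subtype)) ∘ₗ
      (DirectSum.decomposeAlgEquiv 𝒜).toLinearMap)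

/-- The `d`-graded flip `P₂₁,d`, sending `a ⊗ b` (homogeneous) to
`(-1)^{(|a|+d)(|b|+d)} b ⊗ a`. -/
def P21d (d : ℤ) : A ⊗[K] A →ₗ[K] A ⊗[K] A :=
  sgn K (d * d) • (gflip 𝒜 ∘ₗ TensorProduct.map (twist 𝒜 d) (twist 𝒜 d))

/-- Outer left action of `A` on `A ⊗ A`: `a ⬝ (x' ⊗ x'') = (a x') ⊗ x''`. -/
def outL (a : A) : A ⊗[K] A →ₗ[K] A ⊗[K] A := LinearMap.rTensor A (LinearMap.mulLeft K a)

/-- Outer right action of `A` on `A ⊗ A`: `(x' ⊗ x'') ⬝ b = x' ⊗ (x'' b)`. -/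
def outR (b : A) : A ⊗[K] A →ₗ[K] A ⊗[K] A := LinearMap.lTensor A (LinearMap.mulRight K b)

/-- Inner left action of a homogeneous `a` of degree `p` on `A ⊗ A`:
`a * (x' ⊗ x'') = (-1)^{|a||x'|} x' ⊗ (a x'')`. -/
def innL (p : ℤ) (a : A) : A ⊗[K] A →ₗ[K] A ⊗[K] A :=
  (LinearMap.lTensor A (LinearMap.mulLeft K a)) ∘ₗ (LinearMap.rTensor A (twist 𝒜 p))

/-- Inner right action of a homogeneous `b` of degree `q` on `A ⊗ A`:
`(x' ⊗ x'') * b = (-1)^{|b||x''|} (x' b) ⊗ x''`. -/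
def innR (q : ℤ) (b : A) : A ⊗[K] A →ₗ[K] A ⊗[K] A :=
  (LinearMap.rTensor A (LinearMap.mulRight K b)) ∘ₗ (LinearMap.lTensor A (twist 𝒜 q))

/-- The degree-`n` part `⊕_{i+j=n} A^i ⊗ A^j` of `A ⊗ A`, as the span of
homogeneous pure tensors of total degree `n`. -/
def degSub (n : ℤ) : Submodule K (A ⊗[K] A) :=
  Submodule.span K
    {z | ∃ (i j : ℤ) (x' x'' : A), i + j = n ∧ x' ∈ 𝒜 i ∧ x'' ∈ 𝒜 j ∧ z = x' ⊗ₜ[K] x''}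

/-!
Applying the second Leibniz rule to `ab` and to `ba` expresses `⟪ab,c⟫` and `⟪ba,c⟫` through
inner actions of `a` and `b` on `⟪b,c⟫` and `⟪a,c⟫`. Once the two tensor factors are multiplied,
the inner left and inner right actions of a homogeneous `x` on a tensor of total degree `n`
differ only by the sign `(-1)^{|x|n}`: both produce `x' x x''`, with signs `(-1)^{|x||x'|}` and
`(-1)^{|x||x''|}`. Since `⟪b,c⟫` and `⟪a,c⟫` have known total degrees, the two terms of
`⟨ab,c⟩` match those of `⟨ba,c⟩` up to `(-1)^{|a||b|}`. The vanishing on `[A,A]` then follows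
by linearity in both arguments.
-/

lemma sgn_add (m n : ℤ) : sgn K (m + n) = sgn K m * sgn K n := by
  simp [sgn, Int.negOnePow_add]

lemma sgn_eq_of_even_sub {m n : ℤ} (h : Even (m - n)) : sgn K m = sgn K n := by
  simp [sgn, (Int.negOnePow_eq_iff m n).2 h]

lemma twist_apply_of_mem {p : ℤ} {x : A} (hx : x ∈ 𝒜 p) (k : ℤ) :
    twist 𝒜 k x = sgn K (p * k) • x := by
  have hdecomp : (DirectSum.decomposeAlgEquiv 𝒜).toLinearMap x
      = DirectSum.lof K ℤ (fun i => 𝒜 i) p ⟨x, hx⟩ := by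
    simp [DirectSum.decompose_of_mem 𝒜 hx, DirectSum.lof_eq_of]
  rw [twist, LinearMap.comp_apply, hdecomp, DirectSum.toModule_lof]
  rfl

lemma innL_tmul_of_mem {i : ℤ} {x' : A} (hx' : x' ∈ 𝒜 i) (p : ℤ) (a x'' : A) :
    innL 𝒜 p a (x' ⊗ₜ[K] x'') = sgn K (i * p) • (x' ⊗ₜ[K] (a * x'')) := by
  rw [innL, LinearMap.comp_apply, LinearMap.rTensor_tmul, twist_apply_of_mem 𝒜 hx',
    ← TensorProduct.smul_tmul', map_smul, LinearMap.lTensor_tmul, LinearMap.mulLeft_apply]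

lemma innR_tmul_of_mem {j : ℤ} {x'' : A} (hx'' : x'' ∈ 𝒜 j) (p : ℤ) (a x' : A) :
    innR 𝒜 p a (x' ⊗ₜ[K] x'') = sgn K (j * p) • ((x' * a) ⊗ₜ[K] x'') := by
  rw [innR, LinearMap.comp_apply, LinearMap.lTensor_tmul, twist_apply_of_mem 𝒜 hx'',
    TensorProduct.tmul_smul, map_smul, LinearMap.rTensor_tmul, LinearMap.mulRight_apply]

lemma mul'_innL_of_mem_degSub {n : ℤ} (p : ℤ) (a : A) {z : A ⊗[K] A} (hz : z ∈ degSub 𝒜 n) :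
    LinearMap.mul' K A (innL 𝒜 p a z) = sgn K (p * n) • LinearMap.mul' K A (innR 𝒜 p a z) := by
  induction hz using Submodule.span_induction with
  | mem z hz =>
    obtain ⟨i, j, x', x'', rfl, hx', hx'', rfl⟩ := hz
    rw [innL_tmul_of_mem 𝒜 hx', innR_tmul_of_mem 𝒜 hx'', map_smul, map_smul,
      LinearMap.mul'_apply, LinearMap.mul'_apply, smul_smul, mul_assoc, ← sgn_add]
    exact congrArg (· • _) (sgn_eq_of_even_sub ⟨-(j * p), by ring⟩)
  | zero => simp
  | add _ _ _ _ h₁ h₂ => simp only [map_add, h₁, h₂, smul_add]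
  | smul r _ _ h => rw [map_smul, map_smul, h, map_smul, map_smul, smul_comm]

/-- The bracket `⟨a,b⟩ = ⟪a,b⟫'⟪a,b⟫''` associated with a bibracket `F`. -/
def assocBracket (F : A ⊗[K] A →ₗ[K] A ⊗[K] A) : A →ₗ[K] A →ₗ[K] A :=
  (TensorProduct.mk K A A).compr₂ (LinearMap.mul' K A ∘ₗ F)

theorem assocBracket_mul_comm (d : ℤ) (F : A ⊗[K] A →ₗ[K] A ⊗[K] A)
    (hdeg : ∀ (p q : ℤ) (a b : A), a ∈ 𝒜 p → b ∈ 𝒜 q →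
      F (a ⊗ₜ[K] b) ∈ degSub 𝒜 (p + q + d))
    (hL2 : ∀ (pa pb pc : ℤ) (a b c : A), a ∈ 𝒜 pa → b ∈ 𝒜 pb → c ∈ 𝒜 pc →
      F ((a * b) ⊗ₜ[K] c) =
        innL 𝒜 pa a (F (b ⊗ₜ[K] c)) +
          sgn K (pb * (pc + d)) • innR 𝒜 pb b (F (a ⊗ₜ[K] c)))
    {pa pb pc : ℤ} {a b c : A} (ha : a ∈ 𝒜 pa) (hb : b ∈ 𝒜 pb) (hc : c ∈ 𝒜 pc) :
    assocBracket F (a * b) c = sgn K (pa * pb) • assocBracket F (b * a) c := by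
  simp only [assocBracket, LinearMap.compr₂_apply, TensorProduct.mk_apply, LinearMap.comp_apply]
  rw [hL2 pa pb pc a b c ha hb hc, hL2 pb pa pc b a c hb ha hc, map_add, map_add, map_smul,
    map_smul, mul'_innL_of_mem_degSub 𝒜 pa a (hdeg pb pc b c hb hc),
    mul'_innL_of_mem_degSub 𝒜 pb b (hdeg pa pc a c ha hc), smul_add, smul_smul, smul_smul,
    add_comm, ← sgn_add, ← sgn_add]
  congr 2
  · exact sgn_eq_of_even_sub ⟨-(pa * pb), by ring⟩
  · exact sgn_eq_of_even_sub ⟨0, by ring⟩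

def gradedCommutatorSpan (ℳ : ℤ → Submodule K A) : Submodule K A :=
  Submodule.span K
    {z : A | ∃ (p q : ℤ) (u v : A), u ∈ ℳ p ∧ v ∈ ℳ q ∧ z = u * v - sgn K (p * q) • (v * u)}

lemma gradedCommutatorSpan_le_ker {ℳ : ℤ → Submodule K A} [DirectSum.Decomposition ℳ]
    {M : Type*} [AddCommGroup M] [Module K M] (B : A →ₗ[K] A →ₗ[K] M)
    (hB : ∀ (p q r : ℤ) (u v c : A), u ∈ ℳ p → v ∈ ℳ q → c ∈ ℳ r →
      B (u * v) c = sgn K (p * q) • B (v * u) c) :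
    gradedCommutatorSpan ℳ ≤ LinearMap.ker B := by
  refine Submodule.span_le.2 ?_
  rintro _ ⟨p, q, u, v, hu, hv, rfl⟩
  refine LinearMap.mem_ker.2 (DirectSum.decompose_lhom_ext ℳ fun r => ?_)
  ext ⟨c, hc⟩
  simp [hB p q r u v c hu hv hc]

theorem stmt5 (d : ℤ) (F : A ⊗[K] A →ₗ[K] A ⊗[K] A)
    (hdeg : ∀ (p q : ℤ) (a b : A), a ∈ 𝒜 p → b ∈ 𝒜 q →
      F (a ⊗ₜ[K] b) ∈ degSub 𝒜 (p + q + d))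
    (hL2 : ∀ (pa pb pc : ℤ) (a b c : A), a ∈ 𝒜 pa → b ∈ 𝒜 pb → c ∈ 𝒜 pc →
      F ((a * b) ⊗ₜ[K] c) =
        innL 𝒜 pa a (F (b ⊗ₜ[K] c)) +
          sgn K (pb * (pc + d)) • innR 𝒜 pb b (F (a ⊗ₜ[K] c))) :
    (∀ (pa pb pc : ℤ) (a b c : A), a ∈ 𝒜 pa → b ∈ 𝒜 pb → c ∈ 𝒜 pc →
        LinearMap.mul' K A (F ((a * b) ⊗ₜ[K] c)) =
          sgn K (pa * pb) • LinearMap.mul' K A (F ((b * a) ⊗ₜ[K] c))) ∧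
    (∀ x ∈ Submodule.span K
        {z : A | ∃ (p q : ℤ) (u v : A), u ∈ 𝒜 p ∧ v ∈ 𝒜 q ∧
          z = u * v - sgn K (p * q) • (v * u)},
      ∀ c : A, LinearMap.mul' K A (F (x ⊗ₜ[K] c)) = 0) := by
  refine ⟨fun pa pb pc a b c ha hb hc =>
    assocBracket_mul_comm 𝒜 d F hdeg hL2 ha hb hc, fun x hx c => ?_⟩
  have hker := gradedCommutatorSpan_le_ker (ℳ := 𝒜) (assocBracket F)
    (fun _ _ _ _ _ _ hu hv hc => assocBracket_mul_comm 𝒜 d F hdeg hL2 hu hv hc) hx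
  exact LinearMap.congr_fun (LinearMap.mem_ker.1 hker) c
end
end

section
/- Let A be a Z-graded algebra over a commutative ring K, d an integer, and ⟪-,-⟫ a d-graded bibracket on A. Then the associated bracket ⟨a,b⟩ = ⟪a,b⟫' ⟪a,b⟫'' has degree d and satisfies the d-graded Leibniz rule in the second variable: ⟨a, bc⟩ = ⟨a,b⟩ c + (-1)^{(|a|+d)|b|} b ⟨a,c⟩ for all homogeneous a, b, c in A. -/
open scoped TensorProduct

noncomputable section

variable {K : Type*} [CommRing K] {A : Type*} [Ring A] [Algebra K A]
variable (𝒜 : ℤ → Submodule K A) [GradedAlgebra 𝒜]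

/-- the bracket associated with a `d`-graded bibracket has degree `d` and
satisfies the `d`-graded Leibniz rule in the second variable. -/
theorem stmt7 (d : ℤ) (F : A ⊗[K] A →ₗ[K] A ⊗[K] A)
    (hdeg : ∀ (p q : ℤ) (a b : A), a ∈ 𝒜 p → b ∈ 𝒜 q →
      F (a ⊗ₜ[K] b) ∈ degSub 𝒜 (p + q + d))
    (hL1 : ∀ (pa pb : ℤ) (a b c : A), a ∈ 𝒜 pa → b ∈ 𝒜 pb →
      F (a ⊗ₜ[K] (b * c)) =
        outR c (F (a ⊗ₜ[K] b)) + sgn K ((pa + d) * pb) • outL b (F (a ⊗ₜ[K] c)))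
    (hL2 : ∀ (pa pb pc : ℤ) (a b c : A), a ∈ 𝒜 pa → b ∈ 𝒜 pb → c ∈ 𝒜 pc →
      F ((a * b) ⊗ₜ[K] c) =
        innL 𝒜 pa a (F (b ⊗ₜ[K] c)) +
          sgn K (pb * (pc + d)) • innR 𝒜 pb b (F (a ⊗ₜ[K] c))) :
    (∀ (p q : ℤ) (a b : A), a ∈ 𝒜 p → b ∈ 𝒜 q →
        LinearMap.mul' K A (F (a ⊗ₜ[K] b)) ∈ 𝒜 (p + q + d)) ∧
    (∀ (pa pb pc : ℤ) (a b c : A), a ∈ 𝒜 pa → b ∈ 𝒜 pb → c ∈ 𝒜 pc →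
        LinearMap.mul' K A (F (a ⊗ₜ[K] (b * c))) =
          LinearMap.mul' K A (F (a ⊗ₜ[K] b)) * c +
            sgn K ((pa + d) * pb) • (b * LinearMap.mul' K A (F (a ⊗ₜ[K] c)))) := by
  have houtR : ∀ (c : A) (z : A ⊗[K] A),
      LinearMap.mul' K A (outR (K := K) c z) = LinearMap.mul' K A z * c := by
    intro c z
    induction z using TensorProduct.induction_on with
    | zero => simp
    | tmul x y => simp [outR, LinearMap.mul'_apply, mul_assoc]
    | add x y hx hy => simp [map_add, hx, hy, add_mul]
  have houtL : ∀ (b : A) (z : A ⊗[K] A),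
      LinearMap.mul' K A (outL (K := K) b z) = b * LinearMap.mul' K A z := by
    intro b z
    induction z using TensorProduct.induction_on with
    | zero => simp
    | tmul x y => simp [outL, LinearMap.mul'_apply, mul_assoc]
    | add x y hx hy => simp [map_add, hx, hy, mul_add]
  constructor
  · intro p q a b ha hb
    have h := hdeg p q a b ha hb
    have hle : degSub 𝒜 (p + q + d) ≤ (𝒜 (p + q + d)).comap (LinearMap.mul' K A) := by
      rw [degSub, Submodule.span_le]
      rintro z ⟨i, j, x', x'', hij, hx', hx'', rfl⟩
      simp only [SetLike.mem_coe, Submodule.mem_comap, LinearMap.mul'_apply]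
      exact hij ▸ SetLike.mul_mem_graded hx' hx''
    exact hle h
  · intro pa pb pc a b c ha hb hc
    rw [hL1 pa pb a b c ha hb, map_add, map_smul, houtR, houtL]
end
end
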